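/- For every formula φ0 of L_CSTIT, φ0 is satisfiable in BT+AC structures if and only if the translation tr'(φ0) = p_{φ0} ∧ ⋀_{ψ ∈ sf(φ0)} □B'_ψ, a formula of L_DSTIT, is satisfiable in BT+AC structures. -/

import Mathlib

/-! Common infrastructure for STIT logic (Chellas STIT, deliberative STIT,
historic necessity), following Balbiani, Herzig & Troquard,
"Alternative axiomatics and complexity of deliberative STIT theories". -/

namespace STIT

/-- Formulas of the (combined) STIT language, over a countable set of atoms
(indexed by `ℕ`) and agents indexed by `ℕ` (the actual agent set `Agt` is an
initial segment of `ℕ`).  `cstit i` is the Chellas STIT operator `[i]`,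
`dstit i` is the deliberative STIT operator `[i dstit: ·]`, and `box` is the
historic necessity operator `□`. -/
inductive Fml : Type
  | atm : ℕ → Fml
  | neg : Fml → Fml
  | and : Fml → Fml → Fml
  | cstit : ℕ → Fml → Fml
  | dstit : ℕ → Fml → Fml
  | box : Fml → Fml
  deriving DecidableEq

/-- Material implication `φ → ψ`, as the abbreviation `¬(φ ∧ ¬ψ)`. -/
def impF (φ ψ : Fml) : Fml := .neg (.and φ (.neg ψ))

/-- Disjunction `φ ∨ ψ`, as the abbreviation `¬(¬φ ∧ ¬ψ)`. -/
def orF (φ ψ : Fml) : Fml := .neg (.and (.neg φ) (.neg ψ))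

/-- Biimplication `φ ↔ ψ`, as the abbreviation `(φ → ψ) ∧ (ψ → φ)`. -/
def iffF (φ ψ : Fml) : Fml := .and (impF φ ψ) (impF ψ φ)

/-- `◇φ`, abbreviating `¬□¬φ`. -/
def diaF (φ : Fml) : Fml := .neg (.box (.neg φ))

/-- `⟨i⟩φ`, abbreviating `¬[i]¬φ`. -/
def posF (i : ℕ) (φ : Fml) : Fml := .neg (.cstit i (.neg φ))

/-- Conjunction of a (finite) list of formulas; the empty conjunction is a
tautology `⊤`. -/
def conjF : List Fml → Fml
  | [] => impF (.atm 0) (.atm 0)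
  | [φ] => φ
  | φ :: l => .and φ (conjF l)

/-- The length `‖φ‖` of a formula. -/
def len : Fml → ℕ
  | .atm _ => 1
  | .neg φ => 1 + len φ
  | .and φ ψ => 3 + len φ + len ψ
  | .cstit _ φ => 3 + len φ
  | .dstit _ φ => 5 + len φ
  | .box φ => 1 + len φ

/-- The set `sf φ` of subformulas of `φ`. -/
def sf : Fml → Finset Fml
  | .atm p => {.atm p}
  | .neg φ => insert (.neg φ) (sf φ)
  | .and φ ψ => insert (.and φ ψ) (sf φ ∪ sf ψ)
  | .cstit i φ => insert (.cstit i φ) (sf φ)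
  | .dstit i φ => insert (.dstit i φ) (sf φ)
  | .box φ => insert (.box φ) (sf φ)

/-- The set of atoms occurring in a formula. -/
def atoms : Fml → Finset ℕ
  | .atm p => {p}
  | .neg φ => atoms φ
  | .and φ ψ => atoms φ ∪ atoms ψ
  | .cstit _ φ => atoms φ
  | .dstit _ φ => atoms φ
  | .box φ => atoms φ

/-- `φ` contains no deliberative STIT operator (so `φ` belongs to `L_CSTIT`
when it moreover only uses box/cstit). -/
def NoDstit : Fml → Prop
  | .atm _ => True
  | .neg φ => NoDstit φ
  | .and φ ψ => NoDstit φ ∧ NoDstit ψ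
  | .cstit _ φ => NoDstit φ
  | .dstit _ _ => False
  | .box φ => NoDstit φ

/-- `φ` contains no Chellas STIT operator (so `φ` belongs to `L_DSTIT`). -/
def NoCstit : Fml → Prop
  | .atm _ => True
  | .neg φ => NoCstit φ
  | .and φ ψ => NoCstit φ ∧ NoCstit ψ
  | .cstit _ _ => False
  | .dstit _ φ => NoCstit φ
  | .box φ => NoCstit φ

/-- `φ` contains no historic necessity operator. -/
def NoBox : Fml → Prop
  | .atm _ => True
  | .neg φ => NoBox φ
  | .and φ ψ => NoBox φ ∧ NoBox ψ
  | .cstit _ φ => NoBox φ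
  | .dstit _ φ => NoBox φ
  | .box _ => False

/-- All agents occurring in `φ` belong to `A`. -/
def AgentsIn (A : Set ℕ) : Fml → Prop
  | .atm _ => True
  | .neg φ => AgentsIn A φ
  | .and φ ψ => AgentsIn A φ ∧ AgentsIn A ψ
  | .cstit i φ => i ∈ A ∧ AgentsIn A φ
  | .dstit i φ => i ∈ A ∧ AgentsIn A φ
  | .box φ => AgentsIn A φ

/-- `A` is an initial segment `{0, 1, …}` of `ℕ`. -/
def InitSeg (A : Set ℕ) : Prop := ∀ i ∈ A, ∀ j : ℕ, j ≤ i → j ∈ A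

/-- A BT+AC model over the agent set `Agt`: a nonempty tree-like strict
order of moments, together with a choice function and a valuation.
Histories are represented as maximal chains (maximal linearly `<`-ordered
subsets) of moments; `Choice i w` is, for each agent `i ∈ Agt`, a partition
of the set `H_w` of histories passing through `w` into nonempty cells,
satisfying the superadditivity constraint (independence of agents). -/
structure BTAC (Agt : Set ℕ) where
  W : Type
  neW : Nonempty W
  lt : W → W → Prop
  lt_irrefl : ∀ w : W, ¬ lt w w
  lt_trans : ∀ {a b c : W}, lt a b → lt b c → lt a c
  treelike : ∀ w₁ w₂ w₃ : W, lt w₁ w₃ → lt w₂ w₃ → w₁ = w₂ ∨ lt w₁ w₂ ∨ lt w₂ w₁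
  Choice : ℕ → W → Set (Set (Set W))
  V : ℕ → W → Set W → Prop
  choice_hist : ∀ i ∈ Agt, ∀ w : W, ∀ Q ∈ Choice i w, ∀ h ∈ Q,
      IsMaxChain lt h ∧ w ∈ h
  choice_cell_nonempty : ∀ i ∈ Agt, ∀ w : W, ∀ Q ∈ Choice i w, Q.Nonempty
  choice_nonempty : ∀ i ∈ Agt, ∀ w : W, (Choice i w).Nonempty
  choice_cover : ∀ i ∈ Agt, ∀ w : W, ∀ h : Set W,
      IsMaxChain lt h → w ∈ h → ∃ Q ∈ Choice i w, h ∈ Q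
  choice_disjoint : ∀ i ∈ Agt, ∀ w : W, ∀ Q ∈ Choice i w, ∀ Q' ∈ Choice i w,
      (Q ∩ Q').Nonempty → Q = Q'
  superadd : ∀ w : W, ∀ s : ℕ → Set (Set W),
      (∀ i ∈ Agt, s i ∈ Choice i w) → (⋂ i ∈ Agt, s i).Nonempty

/-- Truth of a formula at an index `w/h` of a BT+AC model.  (`[i]φ` holds at
`w/h` iff `φ` holds at `w/h'` for every history `h'` in the cell of
`Choice i w` containing `h`; `□φ` holds at `w/h` iff `φ` holds at `w/h'` for
every history `h'` through `w`; `[i dstit: φ]` additionally requires a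
witness history through `w` where `φ` fails.) -/
def truth {Agt : Set ℕ} (M : BTAC Agt) : Fml → M.W → Set M.W → Prop
  | .atm p, w, h => M.V p w h
  | .neg φ, w, h => ¬ truth M φ w h
  | .and φ ψ, w, h => truth M φ w h ∧ truth M ψ w h
  | .cstit i φ, w, h =>
      ∀ h' : Set M.W, (∃ Q ∈ M.Choice i w, h ∈ Q ∧ h' ∈ Q) → truth M φ w h'
  | .dstit i φ, w, h =>
      (∀ h' : Set M.W, (∃ Q ∈ M.Choice i w, h ∈ Q ∧ h' ∈ Q) → truth M φ w h') ∧
      (∃ h'' : Set M.W, IsMaxChain M.lt h'' ∧ w ∈ h'' ∧ ¬ truth M φ w h'')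
  | .box φ, w, h =>
      ∀ h' : Set M.W, IsMaxChain M.lt h' → w ∈ h' → truth M φ w h'

/-- Validity in BT+AC structures over the agent set `Agt`: truth at every
index `w/h` (with `h` a history and `w ∈ h`) of every BT+AC model. -/
def validBTAC (Agt : Set ℕ) (φ : Fml) : Prop :=
  ∀ M : BTAC Agt, ∀ w : M.W, ∀ h : Set M.W,
    IsMaxChain M.lt h → w ∈ h → truth M φ w h

/-- Satisfiability in BT+AC structures over the agent set `Agt`. -/
def satBTAC (Agt : Set ℕ) (φ : Fml) : Prop :=
  ∃ M : BTAC Agt, ∃ w : M.W, ∃ h : Set M.W,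
    IsMaxChain M.lt h ∧ w ∈ h ∧ truth M φ w h

/-- A Kripke model over the agent set `Agt`: a nonempty set of worlds, an
equivalence relation `R i` for each agent `i ∈ Agt`, and a valuation. -/
structure KModel (Agt : Set ℕ) where
  W : Type
  neW : Nonempty W
  R : ℕ → W → W → Prop
  equiv : ∀ i ∈ Agt, Equivalence (R i)
  V : ℕ → Set W

/-- The general permutation property: for all worlds `w, v` and agents
`l, m, n ∈ Agt`, if `⟨w,v⟩ ∈ R_l ∘ R_m` then there is `u` with `⟨w,u⟩ ∈ R_n`
and `⟨u,v⟩ ∈ R_i` for every agent `i ≠ n`. -/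
def GenPerm {Agt : Set ℕ} (M : KModel Agt) : Prop :=
  ∀ w v : M.W, ∀ l ∈ Agt, ∀ m ∈ Agt, ∀ n ∈ Agt,
    Relation.Comp (M.R l) (M.R m) w v →
    ∃ u : M.W, M.R n w u ∧ ∀ i ∈ Agt, i ≠ n → M.R i u v

/-- Truth in a Kripke model: `[i]` is interpreted by `R i`, and `□` by the
composition `R 1 ∘ R 0` (so that `Def(□)` holds). -/
def ktruth {Agt : Set ℕ} (M : KModel Agt) : Fml → M.W → Prop
  | .atm p, w => w ∈ M.V p
  | .neg φ, w => ¬ ktruth M φ w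
  | .and φ ψ, w => ktruth M φ w ∧ ktruth M ψ w
  | .cstit i φ, w => ∀ u : M.W, M.R i w u → ktruth M φ u
  | .dstit i φ, w =>
      (∀ u : M.W, M.R i w u → ktruth M φ u) ∧
      (∃ u : M.W, Relation.Comp (M.R 1) (M.R 0) w u ∧ ¬ ktruth M φ u)
  | .box φ, w => ∀ u : M.W, Relation.Comp (M.R 1) (M.R 0) w u → ktruth M φ u

/-- Validity in all Kripke models over `Agt` (with equivalence relations)
satisfying the general permutation property. -/
def validK (Agt : Set ℕ) (φ : Fml) : Prop :=
  ∀ M : KModel Agt, GenPerm M → ∀ w : M.W, ktruth M φ w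

/-- Satisfiability in some Kripke model over `Agt` (with equivalence
relations) satisfying the general permutation property. -/
def satK (Agt : Set ℕ) (φ : Fml) : Prop :=
  ∃ M : KModel Agt, GenPerm M ∧ ∃ w : M.W, ktruth M φ w

/-- `φ` is (a substitution instance of) a propositional tautology: it is true
under every assignment of truth values to formulas that respects `¬` and `∧`. -/
def Taut (φ : Fml) : Prop :=
  ∀ v : Fml → Prop,
    (∀ ψ : Fml, v (.neg ψ) ↔ ¬ v ψ) →
    (∀ ψ χ : Fml, v (.and ψ χ) ↔ (v ψ ∧ v χ)) →
    v φ

/-- The S5 axiom schemas (K, T and 5) for a box-like operator `op`. -/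
def s5Set (op : Fml → Fml) : Set Fml :=
  {χ | (∃ φ ψ : Fml, χ = impF (op (impF φ ψ)) (impF (op φ) (op ψ))) ∨
       (∃ φ : Fml, χ = impF (op φ) φ) ∨
       (∃ φ : Fml, χ = impF (.neg (op (.neg φ))) (op (.neg (op (.neg φ)))))}

/-- The schemas `(Incl_i) : □φ → [i]φ` for each agent `i ∈ Agt`. -/
def inclSet (Agt : Set ℕ) : Set Fml :=
  {χ | ∃ i ∈ Agt, ∃ φ : Fml, χ = impF (.box φ) (.cstit i φ)}

/-- The formula `(AAIA_k) : ◇φ → ⟨k⟩⋀_{0 ≤ i < k}⟨i⟩φ`. -/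
def aaiaFml (k : ℕ) (φ : Fml) : Fml :=
  impF (diaF φ) (posF k (conjF ((List.range k).map (fun i => posF i φ))))

/-- The alternative independence schemas `(AAIA_k)` for all `k ≥ 1` with
agents `0, …, k ∈ Agt`. -/
def aaiaSet (Agt : Set ℕ) : Set Fml :=
  {χ | ∃ k : ℕ, 1 ≤ k ∧ (∀ i ≤ k, i ∈ Agt) ∧ ∃ φ : Fml, χ = aaiaFml k φ}

/-- The formula `(AIA_k) : (◇[0]φ₀ ∧ … ∧ ◇[k]φₖ) → ◇([0]φ₀ ∧ … ∧ [k]φₖ)`. -/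
def aiaFml (k : ℕ) (φs : ℕ → Fml) : Fml :=
  impF (conjF ((List.range (k+1)).map (fun i => diaF (.cstit i (φs i)))))
       (diaF (conjF ((List.range (k+1)).map (fun i => .cstit i (φs i)))))

/-- The formula `(GPerm_k) : ⟨l⟩⟨m⟩φ → ⟨n⟩⋀_{i ≤ k, i ≠ n}⟨i⟩φ`. -/
def gpermFml (k l m n : ℕ) (φ : Fml) : Fml :=
  impF (posF l (posF m φ))
       (posF n (conjF (((List.range (k+1)).filter (fun i => i != n)).map
          (fun i => posF i φ))))

/-- The general permutation schemas `(GPerm_k)` for all `k ≥ 0` (with agents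
`0, …, k ∈ Agt`) and agents `l, m, n ∈ Agt`. -/
def gpermSet (Agt : Set ℕ) : Set Fml :=
  {χ | ∃ k : ℕ, (∀ i ≤ k, i ∈ Agt) ∧
       ∃ l ∈ Agt, ∃ m ∈ Agt, ∃ n ∈ Agt, ∃ φ : Fml, χ = gpermFml k l m n φ}

/-- The definition schema `Def(□) : □φ ↔ [1][0]φ`. -/
def defBoxSet : Set Fml :=
  {χ | ∃ φ : Fml, χ = iffF (.box φ) (.cstit 1 (.cstit 0 φ))}

/-- The alternative axiomatics of Section 3: `S5(□)`, `S5(i)` for each agent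
`i ∈ Agt`, `(Incl_i)` and `(AAIA_k)`. -/
def xuAltAx (Agt : Set ℕ) : Set Fml :=
  s5Set Fml.box ∪ (⋃ i ∈ Agt, s5Set (fun φ => Fml.cstit i φ)) ∪
    inclSet Agt ∪ aaiaSet Agt

/-- The axiomatics of Section 4: `S5(i)` for each agent `i ∈ Agt`, `Def(□)`
and `(GPerm_k)`. -/
def gpermAx (Agt : Set ℕ) : Set Fml :=
  (⋃ i ∈ Agt, s5Set (fun φ => Fml.cstit i φ)) ∪ defBoxSet ∪ gpermSet Agt

/-- Hilbert-style provability from the axiom set `Ax` (together with all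
propositional tautologies) by modus ponens and `□`-necessitation. -/
inductive ProvB (Ax : Set Fml) : Fml → Prop
  | taut {φ : Fml} : Taut φ → ProvB Ax φ
  | axm {φ : Fml} : φ ∈ Ax → ProvB Ax φ
  | mp {φ ψ : Fml} : ProvB Ax (impF φ ψ) → ProvB Ax φ → ProvB Ax ψ
  | nec {φ : Fml} : ProvB Ax φ → ProvB Ax (.box φ)

/-- Hilbert-style provability from the axiom set `Ax` (together with all
propositional tautologies) by modus ponens and `[i]`-necessitation for each
agent `i ∈ Agt`. -/
inductive ProvC (Agt : Set ℕ) (Ax : Set Fml) : Fml → Prop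
  | taut {φ : Fml} : Taut φ → ProvC Agt Ax φ
  | axm {φ : Fml} : φ ∈ Ax → ProvC Agt Ax φ
  | mp {φ ψ : Fml} : ProvC Agt Ax (impF φ ψ) → ProvC Agt Ax φ → ProvC Agt Ax ψ
  | nec {i : ℕ} {φ : Fml} : i ∈ Agt → ProvC Agt Ax φ → ProvC Agt Ax (.cstit i φ)

/-- The biimplication `B_ψ` relating the fresh atom `p_ψ` (given by `pA ψ`)
with `ψ`, used in the translation `tr` from `L_DSTIT` to `L_CSTIT`:
`B_{[i dstit: φ]} = (p_{[i dstit: φ]} ↔ [i]p_φ ∧ ¬□p_φ)`. -/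
def Beq (pA : Fml → ℕ) : Fml → Fml
  | .atm q => iffF (.atm (pA (.atm q))) (.atm q)
  | .neg φ => iffF (.atm (pA (.neg φ))) (.neg (.atm (pA φ)))
  | .and φ ψ => iffF (.atm (pA (.and φ ψ))) (.and (.atm (pA φ)) (.atm (pA ψ)))
  | .cstit i φ => iffF (.atm (pA (.cstit i φ))) (.cstit i (.atm (pA φ)))
  | .dstit i φ => iffF (.atm (pA (.dstit i φ)))
      (.and (.cstit i (.atm (pA φ))) (.neg (.box (.atm (pA φ)))))
  | .box φ => iffF (.atm (pA (.box φ))) (.box (.atm (pA φ)))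

/-- The biimplication `B'_ψ` used in the translation `tr'` from `L_CSTIT` to
`L_DSTIT`: `B'_{[i]φ} = (p_{[i]φ} ↔ [i dstit: p_φ] ∨ □p_φ)`. -/
def Beq' (pA : Fml → ℕ) : Fml → Fml
  | .atm q => iffF (.atm (pA (.atm q))) (.atm q)
  | .neg φ => iffF (.atm (pA (.neg φ))) (.neg (.atm (pA φ)))
  | .and φ ψ => iffF (.atm (pA (.and φ ψ))) (.and (.atm (pA φ)) (.atm (pA ψ)))
  | .cstit i φ => iffF (.atm (pA (.cstit i φ)))
      (orF (.dstit i (.atm (pA φ))) (.box (.atm (pA φ))))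
  | .dstit i φ => iffF (.atm (pA (.dstit i φ))) (.dstit i (.atm (pA φ)))
  | .box φ => iffF (.atm (pA (.box φ))) (.box (.atm (pA φ)))

/-- The translation `tr(φ₀) = p_{φ₀} ∧ ⋀_{ψ ∈ sf(φ₀)} □B_ψ`. -/
noncomputable def tr (pA : Fml → ℕ) (φ0 : Fml) : Fml :=
  .and (.atm (pA φ0)) (conjF ((sf φ0).toList.map (fun ψ => .box (Beq pA ψ))))

/-- The translation `tr'(φ₀) = p_{φ₀} ∧ ⋀_{ψ ∈ sf(φ₀)} □B'_ψ`. -/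
noncomputable def tr' (pA : Fml → ℕ) (φ0 : Fml) : Fml :=
  .and (.atm (pA φ0)) (conjF ((sf φ0).toList.map (fun ψ => .box (Beq' pA ψ))))

/-- The atoms `p_ψ = pA ψ` for `ψ ∈ sf φ₀` are pairwise distinct and fresh
(none occurs in `φ₀`). -/
def Fresh (pA : Fml → ℕ) (φ0 : Fml) : Prop :=
  Set.InjOn pA ↑(sf φ0) ∧ ∀ ψ ∈ sf φ0, pA ψ ∉ atoms φ0

/-! In every BT+AC model `[i]χ ↔ [i dstit: χ] ∨ □χ`. Hence, at a moment `w` where the atom `p_χ`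
of each immediate subformula `χ` of `ψ` agrees with `χ` on all histories through `w`, the clause
`B'_ψ` says precisely that `p_ψ` agrees with `ψ` there. If `tr'(φ₀)` holds at `w/h`, recursion
on subformulas therefore makes every `p_ψ` agree with `ψ` at `w`, and `φ₀` holds at `w/h`.
Conversely, in a model of `φ₀` reinterpret each fresh atom `p_ψ` as the truth set of `ψ`; by
freshness this does not change the truth of any subformula of `φ₀`, so every `B'_ψ` holds
everywhere. -/

def children : Fml → List Fml
  | .atm _ => []
  | .neg φ => [φ]
  | .and φ ψ => [φ, ψ]
  | .cstit _ φ => [φ]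
  | .dstit _ φ => [φ]
  | .box φ => [φ]

lemma len_lt_of_mem_children {φ ψ : Fml} (h : φ ∈ children ψ) : len φ < len ψ := by
  cases ψ <;> simp only [children, List.mem_cons, List.not_mem_nil, or_false] at h <;>
    obtain rfl | rfl := h <;> simp only [len] <;> omega

lemma mem_sf_self (φ : Fml) : φ ∈ sf φ := by
  cases φ <;> simp [sf]

lemma sf_subset_of_mem {φ ψ : Fml} (h : ψ ∈ sf φ) : sf ψ ⊆ sf φ := by
  induction φ with
  | atm p => simp_all [sf]
  | neg φ ih | cstit _ φ ih | dstit _ φ ih | box φ ih =>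
    simp only [sf, Finset.mem_insert] at h ⊢
    rcases h with rfl | h
    · rfl
    · exact (ih h).trans (Finset.subset_insert _ _)
  | and φ χ ih₁ ih₂ =>
    simp only [sf, Finset.mem_insert, Finset.mem_union] at h ⊢
    rcases h with rfl | h | h
    · rfl
    · exact (ih₁ h).trans (Finset.subset_union_left.trans (Finset.subset_insert _ _))
    · exact (ih₂ h).trans (Finset.subset_union_right.trans (Finset.subset_insert _ _))

lemma mem_sf_of_mem_children {φ ψ χ : Fml} (hψ : ψ ∈ sf φ) (hχ : χ ∈ children ψ) :
    χ ∈ sf φ := by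
  refine sf_subset_of_mem hψ ?_
  cases ψ <;> simp only [children, List.mem_cons, List.not_mem_nil, or_false] at hχ <;>
    obtain rfl | rfl := hχ <;> simp [sf, mem_sf_self]

lemma atoms_subset_of_mem_sf {φ ψ : Fml} (h : ψ ∈ sf φ) : atoms ψ ⊆ atoms φ := by
  induction φ with
  | atm p => simp_all [sf]
  | neg φ ih | cstit _ φ ih | dstit _ φ ih | box φ ih =>
    simp only [sf, Finset.mem_insert] at h
    rcases h with rfl | h
    · rfl
    · exact ih h
  | and φ χ ih₁ ih₂ =>
    simp only [sf, Finset.mem_insert, Finset.mem_union] at h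
    rcases h with rfl | h | h
    · rfl
    · exact (ih₁ h).trans Finset.subset_union_left
    · exact (ih₂ h).trans Finset.subset_union_right

lemma agentsIn_of_mem_sf {A : Set ℕ} {φ ψ : Fml} (hφ : AgentsIn A φ) (h : ψ ∈ sf φ) :
    AgentsIn A ψ := by
  induction φ with
  | atm p => simp_all [sf]
  | neg φ ih | box φ ih =>
    simp only [sf, Finset.mem_insert] at h
    rcases h with rfl | h
    · exact hφ
    · exact ih hφ h
  | cstit _ φ ih | dstit _ φ ih =>
    simp only [sf, Finset.mem_insert] at h
    rcases h with rfl | h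
    · exact hφ
    · exact ih hφ.2 h
  | and φ χ ih₁ ih₂ =>
    simp only [sf, Finset.mem_insert, Finset.mem_union] at h
    rcases h with rfl | h | h
    · exact hφ
    · exact ih₁ hφ.1 h
    · exact ih₂ hφ.2 h

section Semantics

variable {Agt : Set ℕ} (M : BTAC Agt)

lemma truth_orF (φ ψ : Fml) (w : M.W) (h : Set M.W) :
    truth M (orF φ ψ) w h ↔ truth M φ w h ∨ truth M ψ w h := by
  simp only [orF, truth]; tauto

lemma truth_iffF (φ ψ : Fml) (w : M.W) (h : Set M.W) :
    truth M (iffF φ ψ) w h ↔ (truth M φ w h ↔ truth M ψ w h) := by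
  simp only [iffF, impF, truth]; tauto

lemma truth_conjF (w : M.W) (h : Set M.W) :
    ∀ l : List Fml, truth M (conjF l) w h ↔ ∀ φ ∈ l, truth M φ w h
  | [] => by simp [conjF, impF, truth]
  | [φ] => by simp [conjF]
  | φ :: ψ :: l => by
    rw [List.forall_mem_cons, ← truth_conjF w h (ψ :: l)]
    rfl

lemma truth_dstit_iff (i : ℕ) (φ : Fml) (w : M.W) (h : Set M.W) :
    truth M (.dstit i φ) w h ↔ truth M (.cstit i φ) w h ∧ ¬ truth M (.box φ) w h := by
  simp only [truth, not_forall, exists_prop]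

variable {M}

lemma truth_cstit_of_truth_box {i : ℕ} (hi : i ∈ Agt) {φ : Fml} {w : M.W} {h : Set M.W}
    (hφ : truth M (.box φ) w h) : truth M (.cstit i φ) w h := by
  rintro h' ⟨Q, hQ, -, hh'⟩
  obtain ⟨hmax, hw⟩ := M.choice_hist i hi w Q hQ h' hh'
  exact hφ h' hmax hw

lemma truth_cstit_iff_dstit_or_box {i : ℕ} (hi : i ∈ Agt) (φ : Fml) (w : M.W)
    (h : Set M.W) :
    truth M (.cstit i φ) w h ↔ truth M (.dstit i φ) w h ∨ truth M (.box φ) w h := by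
  rw [truth_dstit_iff]
  by_cases hb : truth M (.box φ) w h
  · simp only [hb, truth_cstit_of_truth_box hi hb, not_true_eq_false, and_false, or_true]
  · simp only [hb, not_false_eq_true, and_true, or_false]

def AgreeAt (M : BTAC Agt) (w : M.W) (φ ψ : Fml) : Prop :=
  ∀ h : Set M.W, IsMaxChain M.lt h → w ∈ h → (truth M φ w h ↔ truth M ψ w h)

lemma truth_box_congr {w : M.W} {φ ψ : Fml} (H : AgreeAt M w φ ψ) (h : Set M.W) :
    truth M (.box φ) w h ↔ truth M (.box ψ) w h :=
  forall_congr' fun h' => forall_congr' fun hmax => forall_congr' fun hw => H h' hmax hw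

lemma truth_cstit_congr {i : ℕ} (hi : i ∈ Agt) {w : M.W} {φ ψ : Fml} (H : AgreeAt M w φ ψ)
    (h : Set M.W) : truth M (.cstit i φ) w h ↔ truth M (.cstit i ψ) w h := by
  refine forall_congr' fun h' => imp_congr_right fun ⟨Q, hQ, _, hh'⟩ => ?_
  obtain ⟨hmax, hw⟩ := M.choice_hist i hi w Q hQ h' hh'
  exact H h' hmax hw

lemma truth_dstit_congr {i : ℕ} (hi : i ∈ Agt) {w : M.W} {φ ψ : Fml} (H : AgreeAt M w φ ψ)
    (h : Set M.W) : truth M (.dstit i φ) w h ↔ truth M (.dstit i ψ) w h := by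
  rw [truth_dstit_iff, truth_dstit_iff, truth_cstit_congr hi H, truth_box_congr H]

lemma truth_Beq'_iff {pA : Fml → ℕ} {ψ : Fml} (hψ : AgentsIn Agt ψ) {w : M.W}
    (hch : ∀ χ ∈ children ψ, AgreeAt M w (.atm (pA χ)) χ) {h : Set M.W}
    (hmax : IsMaxChain M.lt h) (hw : w ∈ h) :
    truth M (Beq' pA ψ) w h ↔ (M.V (pA ψ) w h ↔ truth M ψ w h) := by
  cases ψ <;> simp only [children, List.mem_cons, List.not_mem_nil, or_false,
    forall_eq_or_imp, forall_eq] at hch <;> rw [Beq', truth_iffF] <;> refine iff_congr Iff.rfl ?_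
  case atm => rfl
  case neg => exact not_congr (hch h hmax hw)
  case and => exact and_congr (hch.1 h hmax hw) (hch.2 h hmax hw)
  case cstit =>
    rw [truth_orF, ← truth_cstit_iff_dstit_or_box hψ.1]
    exact truth_cstit_congr hψ.1 hch h
  case dstit => exact truth_dstit_congr hψ.1 hch h
  case box => exact truth_box_congr hch h

lemma agreeAt_of_truth_Beq' {pA : Fml → ℕ} {φ0 : Fml} (hA : AgentsIn Agt φ0) {w : M.W}
    (hB : ∀ ψ ∈ sf φ0, ∀ h : Set M.W, IsMaxChain M.lt h → w ∈ h → truth M (Beq' pA ψ) w h)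
    (ψ : Fml) (hψ : ψ ∈ sf φ0) : AgreeAt M w (.atm (pA ψ)) ψ := fun h hmax hw =>
  (truth_Beq'_iff (agentsIn_of_mem_sf hA hψ)
    (fun χ hχ => agreeAt_of_truth_Beq' hA hB χ (mem_sf_of_mem_children hψ hχ))
    hmax hw).1 (hB ψ hψ h hmax hw)
termination_by len ψ
decreasing_by exact len_lt_of_mem_children hχ

lemma truth_tr'_iff (pA : Fml → ℕ) (φ0 : Fml) (w : M.W) (h : Set M.W) :
    truth M (tr' pA φ0) w h ↔
      M.V (pA φ0) w h ∧ ∀ ψ ∈ sf φ0, truth M (.box (Beq' pA ψ)) w h := by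
  rw [tr', truth, truth_conjF, List.forall_mem_map]
  simp only [Finset.mem_toList]
  rfl

end Semantics

section Relabelling

variable {Agt : Set ℕ}

abbrev BTAC.withV (M : BTAC Agt) (V : ℕ → M.W → Set M.W → Prop) : BTAC Agt :=
  { M with V := V }

lemma truth_withV_iff (M : BTAC Agt) {V : ℕ → M.W → Set M.W → Prop} {φ : Fml}
    (hV : ∀ q ∈ atoms φ, V q = M.V q) (w : M.W) (h : Set M.W) :
    truth (M.withV V) φ w h ↔ truth M φ w h := by
  induction φ generalizing h with
  | atm q => exact iff_of_eq (congrFun (congrFun (hV q (by simp [atoms])) w) h)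
  | neg φ ih => exact not_congr (ih hV h)
  | and φ ψ ih₁ ih₂ =>
    simp only [atoms, Finset.mem_union] at hV
    exact and_congr (ih₁ (fun q hq => hV q (.inl hq)) h) (ih₂ (fun q hq => hV q (.inr hq)) h)
  | cstit i φ ih =>
    exact forall_congr' fun h' => imp_congr_right fun _ => ih hV h'
  | dstit i φ ih =>
    exact and_congr (forall_congr' fun h' => imp_congr_right fun _ => ih hV h')
      (exists_congr fun h' => and_congr_right' (and_congr_right' (not_congr (ih hV h'))))
  | box φ ih =>
    exact forall_congr' fun h' => forall_congr' fun _ => forall_congr' fun _ => ih hV h'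

open Classical in
noncomputable def subformulaValuation (M : BTAC Agt) (pA : Fml → ℕ) (φ0 : Fml) :
    ℕ → M.W → Set M.W → Prop := fun q =>
  if hq : ∃ ψ ∈ sf φ0, pA ψ = q then truth M hq.choose else M.V q

lemma subformulaValuation_apply_pA (M : BTAC Agt) {pA : Fml → ℕ} {φ0 ψ : Fml}
    (hinj : Set.InjOn pA ↑(sf φ0)) (hψ : ψ ∈ sf φ0) :
    subformulaValuation M pA φ0 (pA ψ) = truth M ψ := by
  have hq : ∃ ψ' ∈ sf φ0, pA ψ' = pA ψ := ⟨ψ, hψ, rfl⟩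
  rw [subformulaValuation, dif_pos hq,
    hinj (Finset.mem_coe.2 hq.choose_spec.1) hψ hq.choose_spec.2]

lemma subformulaValuation_of_mem_atoms (M : BTAC Agt) {pA : Fml → ℕ} {φ0 : Fml} {q : ℕ}
    (hfresh : Fresh pA φ0) (hq : q ∈ atoms φ0) : subformulaValuation M pA φ0 q = M.V q := by
  refine dif_neg ?_
  rintro ⟨ψ, hψ, rfl⟩
  exact hfresh.2 ψ hψ hq

lemma truth_withV_subformulaValuation_iff (M : BTAC Agt) {pA : Fml → ℕ} {φ0 ψ : Fml}
    (hfresh : Fresh pA φ0) (hψ : ψ ∈ sf φ0) (w : M.W) (h : Set M.W) :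
    truth (M.withV (subformulaValuation M pA φ0)) ψ w h ↔ truth M ψ w h :=
  truth_withV_iff M (fun _ hq =>
    subformulaValuation_of_mem_atoms M hfresh (atoms_subset_of_mem_sf hψ hq)) w h

lemma agreeAt_withV_subformulaValuation (M : BTAC Agt) {pA : Fml → ℕ} {φ0 ψ : Fml}
    (hfresh : Fresh pA φ0) (hψ : ψ ∈ sf φ0) (w : M.W) :
    AgreeAt (M.withV (subformulaValuation M pA φ0)) w (.atm (pA ψ)) ψ := fun h _ _ =>
  (iff_of_eq (congrFun (congrFun (subformulaValuation_apply_pA M hfresh.1 hψ) w) h)).trans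
    (truth_withV_subformulaValuation_iff M hfresh hψ w h).symm

end Relabelling

lemma satBTAC_tr'_of_satBTAC {Agt : Set ℕ} {φ0 : Fml} (hA : AgentsIn Agt φ0) {pA : Fml → ℕ}
    (hfresh : Fresh pA φ0) (hsat : satBTAC Agt φ0) : satBTAC Agt (tr' pA φ0) := by
  obtain ⟨M, w0, h0, hmax0, hw0, hφ0⟩ := hsat
  set M' := M.withV (subformulaValuation M pA φ0)
  have hagree : ∀ ψ ∈ sf φ0, ∀ w, AgreeAt M' w (.atm (pA ψ)) ψ := fun ψ hψ w =>
    agreeAt_withV_subformulaValuation M hfresh hψ w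
  refine ⟨M', w0, h0, hmax0, hw0, (truth_tr'_iff (M := M') pA φ0 w0 h0).2 ⟨?_, ?_⟩⟩
  · exact (hagree φ0 (mem_sf_self φ0) w0 h0 hmax0 hw0).2
      ((truth_withV_subformulaValuation_iff M hfresh (mem_sf_self φ0) w0 h0).2 hφ0)
  · intro ψ hψ h hmax hw
    exact (truth_Beq'_iff (agentsIn_of_mem_sf hA hψ)
      (fun χ hχ => hagree χ (mem_sf_of_mem_children hψ hχ) w0) hmax hw).2
      (hagree ψ hψ w0 h hmax hw)

lemma satBTAC_of_satBTAC_tr' {Agt : Set ℕ} {φ0 : Fml} (hA : AgentsIn Agt φ0) {pA : Fml → ℕ}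
    (hsat : satBTAC Agt (tr' pA φ0)) : satBTAC Agt φ0 := by
  obtain ⟨M, w0, h0, hmax0, hw0, htr⟩ := hsat
  obtain ⟨hp, hB⟩ := (truth_tr'_iff pA φ0 w0 h0).1 htr
  exact ⟨M, w0, h0, hmax0, hw0,
    (agreeAt_of_truth_Beq' hA hB φ0 (mem_sf_self φ0) h0 hmax0 hw0).1 hp⟩

theorem cstit_sat_iff_tr'_sat_general (Agt : Set ℕ)
    (φ0 : Fml) (hφ0A : AgentsIn Agt φ0)
    (pA : Fml → ℕ) (hfresh : Fresh pA φ0) :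
    satBTAC Agt φ0 ↔ satBTAC Agt (tr' pA φ0) :=
  ⟨satBTAC_tr'_of_satBTAC hφ0A hfresh, satBTAC_of_satBTAC_tr' hφ0A⟩

/-- For every formula `φ₀` of `L_CSTIT`, `φ₀` is satisfiable in
BT+AC structures iff the translation
`tr'(φ₀) = p_{φ₀} ∧ ⋀_{ψ ∈ sf(φ₀)} □B'_ψ`, a formula of `L_DSTIT`, is
satisfiable in BT+AC structures. -/
theorem cstit_sat_iff_tr'_sat (Agt : Set ℕ) (hAgt : InitSeg Agt)
    (φ0 : Fml) (hφ0 : NoDstit φ0) (hφ0A : AgentsIn Agt φ0)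
    (pA : Fml → ℕ) (hfresh : Fresh pA φ0) :
    satBTAC Agt φ0 ↔ satBTAC Agt (tr' pA φ0) :=
  cstit_sat_iff_tr'_sat_general Agt φ0 hφ0A pA hfresh

end STIT
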